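/- The coefficient of S^I in the tree-expanded solution g of the noncommutative Poincaré equation, where I is the Polish code of a Schröder tree T(I), equals the product over internal vertices v of T(I) of 1/(q^{φ(v)-1} - 1), where φ(v) is the number of leaves of the subtree rooted at v. -/

import Mathlib

/-! A node with `d ≥ 2` leaves has `q^{d-1} - 1 ≠ 0`, so the recursion determines `c` uniquely by
structural induction on the tree; the product `mProd` satisfies the same recursion. -/

noncomputable section

/-- Schröder trees: reduced plane trees, i.e. rooted plane trees in which every internal
vertex has at least two children (`node a b l` has children `a`, `b`, followed by `l`). -/
inductive STree where
  | leaf : STree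
  | node (a b : STree) (l : List STree) : STree

mutual
  /-- Number of leaves of a Schröder tree. -/
  def leavesT : STree → ℕ
    | .leaf => 1
    | .node a b l => leavesT a + leavesT b + leavesL l
  def leavesL : List STree → ℕ
    | [] => 0
    | t :: ts => leavesT t + leavesL ts
end

mutual
  /-- The Polish code of a Schröder tree: preorder word writing `arity - 1` at each internal
  vertex and `0` at each leaf (a Schröder pseudocomposition, the exponent word of `S^I`). -/
  def polishT : STree → List ℕ
    | .leaf => [0]
    | .node a b l => (1 + l.length) :: (polishT a ++ polishT b ++ polishL l)
  def polishL : List STree → List ℕ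
    | [] => []
    | t :: ts => polishT t ++ polishL ts
end

mutual
  /-- The closed-form coefficient `m_I(q) = ∏_{v internal vertex} 1/(q^{φ(v)-1} - 1)`,
  where `φ(v)` is the number of leaves of the subtree rooted at `v`. -/
  def mProd : STree → RatFunc ℚ
    | .leaf => 1
    | .node a b l =>
        ((RatFunc.X : RatFunc ℚ) ^ (leavesT (.node a b l) - 1) - 1)⁻¹ *
          (mProd a * mProd b * mProdL l)
  def mProdL : List STree → RatFunc ℚ
    | [] => 1
    | t :: ts => mProd t * mProdL ts
end


theorem leavesT_pos : ∀ t : STree, 0 < leavesT t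
  | .leaf => Nat.one_pos
  | .node a _ _ => by have := leavesT_pos a; simp only [leavesT]; omega

theorem one_lt_leavesT_node (a b : STree) (l : List STree) : 1 < leavesT (.node a b l) := by
  have := leavesT_pos a
  have := leavesT_pos b
  simp only [leavesT]
  omega

theorem RatFunc.X_pow_sub_one_ne_zero {K : Type*} [Field K] {n : ℕ} (hn : n ≠ 0) :
    (RatFunc.X : RatFunc K) ^ n - 1 ≠ 0 := by
  have hpoly : (Polynomial.X : Polynomial K) ^ n - Polynomial.C 1 ≠ 0 :=
    Polynomial.X_pow_sub_C_ne_zero (Nat.pos_of_ne_zero hn) 1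
  simpa [RatFunc.algebraMap_X] using RatFunc.algebraMap_ne_zero hpoly

def IsTreeCoeff (c : STree → RatFunc ℚ) : Prop :=
  c .leaf = 1 ∧ ∀ (a b : STree) (l : List STree),
    ((RatFunc.X : RatFunc ℚ) ^ (leavesT (.node a b l) - 1) - 1) * c (.node a b l) =
      c a * c b * (l.map c).prod

namespace IsTreeCoeff

variable {c : STree → RatFunc ℚ}

mutual

theorem eq_mProd (hc : IsTreeCoeff c) : ∀ t, c t = mProd t
  | .leaf => hc.1
  | .node a b l => by
      have hne : (RatFunc.X : RatFunc ℚ) ^ (leavesT (.node a b l) - 1) - 1 ≠ 0 :=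
        RatFunc.X_pow_sub_one_ne_zero (by have := one_lt_leavesT_node a b l; omega)
      rw [mProd, eq_inv_mul_iff_mul_eq₀ hne, hc.2, hc.eq_mProd a, hc.eq_mProd b,
        hc.prod_map_eq_mProdL l]

theorem prod_map_eq_mProdL (hc : IsTreeCoeff c) : ∀ l, (l.map c).prod = mProdL l
  | [] => rfl
  | t :: ts => by
      rw [List.map_cons, List.prod_cons, mProdL, hc.eq_mProd t, hc.prod_map_eq_mProdL ts]

end

end IsTreeCoeff

/-- **Tree expansion of the Poincaré solution.** The coefficient `c` of `S^I` in the
tree-expanded solution `g` of the noncommutative Poincaré equation, where `I` is the Polish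
code of the Schröder tree `T(I)`, is determined by `c(leaf) = 1` and
`(q^{d(t)-1} - 1) c_t = c_{t_1} ⋯ c_{t_n}` for `t = ∧(t_1,…,t_n)`; it equals
`m_I(q) = ∏_{v internal vertex of T(I)} 1/(q^{φ(v)-1} - 1)`. -/
theorem coeff_of_tree_expansion_eq_prod
    (c : STree → RatFunc ℚ)
    (hleaf : c .leaf = 1)
    (hnode : ∀ (a b : STree) (l : List STree),
      ((RatFunc.X : RatFunc ℚ) ^ (leavesT (.node a b l) - 1) - 1) * c (.node a b l) =
        c a * c b * (l.map c).prod) :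
    ∀ (t : STree) (I : List ℕ), I = polishT t → c t = mProd t :=
  fun t _ _ => IsTreeCoeff.eq_mProd ⟨hleaf, hnode⟩ t
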